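/- arXiv:1103.0396 — 7 statements merged into one kernel-verified Lean document; each statement's English description precedes it below -/
import Mathlib

section
/- For any Q ⊆ 𝒫(M) (possibly containing ∅) and any downward-closed 𝒳 ⊆ 𝒫(M^{k+1}), the Hodges lift satisfies Q_ℋ(𝒳) = { Y ⊆ M^k : ∃F : Y → Q such that Y[F] ∈ 𝒳 }, where Q_ℋ(𝒳) is the downward closure of { h_Q(X) : X ∈ 𝒳 }. -/
theorem setOf_prod_mk_mem_graph_eq {α β : Type*} {Y : Set α} {F : α → Set β} {a : α}
    (ha : a ∈ Y) : {b | (a, b) ∈ {p : α × β | p.1 ∈ Y ∧ p.2 ∈ F p.1}} = F a := by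
  ext b
  simp [ha]

theorem graph_setOf_prod_mk_mem_subset {α β : Type*} (Y : Set α) (X : Set (α × β)) :
    {p : α × β | p.1 ∈ Y ∧ p.2 ∈ {b | (p.1, b) ∈ X}} ⊆ X :=
  fun _ hp => hp.2

/-- For any `Q ⊆ 𝒫(M)` (possibly containing `∅`) and any downward-closed
`𝒳 ⊆ 𝒫(M^{k+1})`, the Hodges lift
`Q_ℋ(𝒳) = ↓{ h_Q(X) : X ∈ 𝒳 }` equals
`{ Y : ∃ F : Y → Q, Y[F] ∈ 𝒳 }`. Membership of `Y` in the downward closure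
is expressed as `∃ X ∈ 𝒳, Y ⊆ h_Q(X)`. -/
theorem hodges_lift_eq {M : Type*} {k : ℕ} (Q : Set (Set M))
    (𝒳 : Set (Set ((Fin k → M) × M)))
    (hdc : ∀ A B : Set ((Fin k → M) × M), A ⊆ B → B ∈ 𝒳 → A ∈ 𝒳) :
    {Y : Set (Fin k → M) | ∃ X ∈ 𝒳, Y ⊆ {a | {b | (a, b) ∈ X} ∈ Q}} =
    {Y : Set (Fin k → M) | ∃ F : (Fin k → M) → Set M,
      (∀ a ∈ Y, F a ∈ Q) ∧
      {p : (Fin k → M) × M | p.1 ∈ Y ∧ p.2 ∈ F p.1} ∈ 𝒳} := by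
  ext Y
  constructor
  · rintro ⟨X, hX, hY⟩
    exact ⟨fun a => {b | (a, b) ∈ X}, hY, hdc _ X (graph_setOf_prod_mk_mem_subset Y X) hX⟩
  · rintro ⟨F, hFQ, hgraph⟩
    refine ⟨_, hgraph, fun a ha => ?_⟩
    rw [Set.mem_ofPred_eq, setOf_prod_mk_mem_graph_eq ha]
    exact hFQ a ha
end

section
/- The Hodges lift of the existential quantifier satisfies: for downward-closed 𝒳 ⊆ 𝒫(M^{k+1}), 𝓛(∃)(𝒳) = { Y ⊆ M^k : ∃ f : Y → M such that Y[f] ∈ 𝒳 }, where Y[f] = { (ā, f(ā)) : ā ∈ Y }. -/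
/-! If `X` covers `Y`, then `X` contains the graph over `Y` of a choice function picking some
`b` with `(a, b) ∈ X`, and that graph lies in the family by downward closure; conversely the
graph of any `f` over `Y` covers `Y` itself. -/

theorem exists_graph_subset_iff_subset_dom {α β : Type*} [Nonempty β] {X : Set (α × β)}
    {Y : Set α} :
    (∃ f : α → β, {p : α × β | p.1 ∈ Y ∧ p.2 = f p.1} ⊆ X) ↔
      Y ⊆ {a | {b | (a, b) ∈ X}.Nonempty} := by
  constructor
  · rintro ⟨f, hf⟩ a ha
    exact ⟨f a, hf ⟨ha, rfl⟩⟩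
  · intro hYX
    choose! f hf using fun a (ha : a ∈ Y) => hYX ha
    refine ⟨f, ?_⟩
    rintro ⟨a, b⟩ ⟨ha, hb : b = f a⟩
    exact hb ▸ hf a ha

/-- The Hodges lift of the existential quantifier `∃_M = {A ⊆ M : A ≠ ∅}`:
for downward-closed `𝒳 ⊆ 𝒫(M^{k+1})`,
`𝓛(∃)(𝒳) = { Y : ∃ f : Y → M, Y[f] ∈ 𝒳 }`,
where `Y[f] = { (ā, f(ā)) : ā ∈ Y }` and membership of `Y` in the lift
`↓{ h_∃(X) : X ∈ 𝒳 }` is expressed as `∃ X ∈ 𝒳, Y ⊆ h_∃(X)`. -/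
theorem hodges_lift_exists {M : Type*} {k : ℕ} [Nonempty M]
    (𝒳 : Set (Set ((Fin k → M) × M)))
    (hdc : ∀ A B : Set ((Fin k → M) × M), A ⊆ B → B ∈ 𝒳 → A ∈ 𝒳) :
    {Y : Set (Fin k → M) | ∃ X ∈ 𝒳, Y ⊆ {a | {b | (a, b) ∈ X}.Nonempty}} =
    {Y : Set (Fin k → M) | ∃ f : (Fin k → M) → M,
      {p : (Fin k → M) × M | p.1 ∈ Y ∧ p.2 = f p.1} ∈ 𝒳} := by
  ext Y
  constructor
  · rintro ⟨X, hX, hYX⟩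
    obtain ⟨f, hf⟩ := exists_graph_subset_iff_subset_dom.2 hYX
    exact ⟨f, hdc _ X hf hX⟩
  · rintro ⟨f, hf⟩
    exact ⟨_, hf, exists_graph_subset_iff_subset_dom.1 ⟨f, subset_rfl⟩⟩
end

section
/- The Hodges lift commutes with iteration of monotone quantifiers: 𝓛(Q₁Q₂) = 𝓛(Q₁) ∘ 𝓛(Q₂), where Q₁Q₂ is the iteration quantifier, for downward-closed input families. -/
/-! Every relation `R` contains the part of it lying over `{a : R_a ∈ Q₂}`, whose fibres are in
`Q₂` and whose base is in `Q₁` when `R ∈ Q₁Q₂`; so a witness for `Q₁Q₂` splits into witnesses for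
`Q₁` and `Q₂` at the cost of shrinking `Z[H]`, which `𝒳` tolerates. Conversely, the fibred set
`{(a, b) : a ∈ A, b ∈ F a}` with `A ∈ Q₁` and all `F a ∈ Q₂` lies in `Q₁Q₂` because `Q₁` is upward
closed, and it turns `Z[G][F]` into `Z[H]` on the nose. -/

namespace Quantifier

variable {α β : Type*}

/-- The iteration `Q₁Q₂`. -/
def iteration (Q₁ : Set (Set α)) (Q₂ : Set (Set β)) : Set (Set (α × β)) :=
  {R | {a | Prod.mk a ⁻¹' R ∈ Q₂} ∈ Q₁}

/-- `A[F] = {(a, b) : a ∈ A, b ∈ F a}`. -/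
def fibred (A : Set α) (F : α → Set β) : Set (α × β) :=
  {q | q.1 ∈ A ∧ q.2 ∈ F q.1}

theorem fibred_mono_right {A : Set α} {F F' : α → Set β} (h : ∀ a ∈ A, F a ⊆ F' a) :
    fibred A F ⊆ fibred A F' :=
  fun _ ⟨ha, hb⟩ => ⟨ha, h _ ha hb⟩

theorem fibred_fibres_subset (R : Set (α × β)) (A : Set α) :
    fibred A (fun a => Prod.mk a ⁻¹' R) ⊆ R :=
  fun _ ⟨_, hq⟩ => hq

theorem fibred_mem_iteration {Q₁ : Set (Set α)} {Q₂ : Set (Set β)} (hQ₁ : IsUpperSet Q₁)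
    {A : Set α} {F : α → Set β} (hA : A ∈ Q₁) (hF : ∀ a ∈ A, F a ∈ Q₂) :
    fibred A F ∈ iteration Q₁ Q₂ := by
  refine hQ₁ (fun a ha => ?_) hA
  have hfibre : Prod.mk a ⁻¹' fibred A F = F a := by
    ext b
    simp [fibred, ha]
  simpa [hfibre] using hF a ha

end Quantifier

open Quantifier in
theorem hodges_lift_iteration_general {M : Type*} {k : ℕ} (Q₁ Q₂ : Set (Set M))
    (h₁ : ∀ A B : Set M, A ∈ Q₁ → A ⊆ B → B ∈ Q₁)
    (𝒳 : Set (Set ((Fin k → M) × M × M)))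
    (hdc : ∀ A B : Set ((Fin k → M) × M × M), A ⊆ B → B ∈ 𝒳 → A ∈ 𝒳) :
    {Z : Set (Fin k → M) | ∃ H : (Fin k → M) → Set (M × M),
      (∀ s ∈ Z, {a : M | {b : M | (a, b) ∈ H s} ∈ Q₂} ∈ Q₁) ∧
      {p : (Fin k → M) × M × M | p.1 ∈ Z ∧ p.2 ∈ H p.1} ∈ 𝒳} =
    {Z : Set (Fin k → M) | ∃ G : (Fin k → M) → Set M,
      (∀ s ∈ Z, G s ∈ Q₁) ∧
      ∃ F : (Fin k → M) × M → Set M,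
        (∀ s ∈ Z, ∀ a ∈ G s, F (s, a) ∈ Q₂) ∧
        {p : (Fin k → M) × M × M |
          p.1 ∈ Z ∧ p.2.1 ∈ G p.1 ∧ p.2.2 ∈ F (p.1, p.2.1)} ∈ 𝒳} := by
  have hQ₁ : IsUpperSet Q₁ := fun A B hAB hA => h₁ A B hA hAB
  ext Z
  constructor
  · rintro ⟨H, hH, hX⟩
    refine ⟨fun s => {a | Prod.mk a ⁻¹' H s ∈ Q₂}, hH,
      fun p => Prod.mk p.2 ⁻¹' H p.1, fun _ _ _ ha => ha, hdc _ _ ?_ hX⟩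
    show fibred Z (fun s => fibred {a | Prod.mk a ⁻¹' H s ∈ Q₂} (Prod.mk · ⁻¹' H s)) ⊆ fibred Z H
    exact fibred_mono_right fun s _ => fibred_fibres_subset (H s) _
  · rintro ⟨G, hG, F, hF, hX⟩
    exact ⟨fun s => fibred (G s) (fun a => F (s, a)),
      fun s hs => fibred_mem_iteration hQ₁ (hG s hs) (hF s hs), hX⟩

/-- The Hodges lift commutes with iteration of monotone quantifiers:
`𝓛(Q₁Q₂) = 𝓛(Q₁) ∘ 𝓛(Q₂)` on downward-closed families.  Using the
characterization of the lift of a monotone quantifier via witness functions,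
this says: for monotone `Q₁, Q₂ ⊆ 𝒫(M)` and downward-closed
`𝒳 ⊆ 𝒫(M^{k+2})`,
`{ Z : ∃ H : Z → Q₁Q₂, Z[H] ∈ 𝒳 } =
 { Z : ∃ G : Z → Q₁, ∃ F : Z[G] → Q₂, Z[G][F] ∈ 𝒳 }`,
where `R ∈ Q₁Q₂ ↔ { a : R_a ∈ Q₂ } ∈ Q₁`. -/
theorem hodges_lift_iteration {M : Type*} {k : ℕ} (Q₁ Q₂ : Set (Set M))
    (h₁ : ∀ A B : Set M, A ∈ Q₁ → A ⊆ B → B ∈ Q₁)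
    (h₂ : ∀ A B : Set M, A ∈ Q₂ → A ⊆ B → B ∈ Q₂)
    (𝒳 : Set (Set ((Fin k → M) × M × M)))
    (hdc : ∀ A B : Set ((Fin k → M) × M × M), A ⊆ B → B ∈ 𝒳 → A ∈ 𝒳) :
    {Z : Set (Fin k → M) | ∃ H : (Fin k → M) → Set (M × M),
      (∀ s ∈ Z, {a : M | {b : M | (a, b) ∈ H s} ∈ Q₂} ∈ Q₁) ∧
      {p : (Fin k → M) × M × M | p.1 ∈ Z ∧ p.2 ∈ H p.1} ∈ 𝒳} =
    {Z : Set (Fin k → M) | ∃ G : (Fin k → M) → Set M,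
      (∀ s ∈ Z, G s ∈ Q₁) ∧
      ∃ F : (Fin k → M) × M → Set M,
        (∀ s ∈ Z, ∀ a ∈ G s, F (s, a) ∈ Q₂) ∧
        {p : (Fin k → M) × M × M |
          p.1 ∈ Z ∧ p.2.1 ∈ G p.1 ∧ p.2.2 ∈ F (p.1, p.2.1)} ∈ 𝒳} :=
  hodges_lift_iteration_general Q₁ Q₂ h₁ 𝒳 hdc
end

section
/- For a monotone quantifier Q of type ⟨1⟩ and teams X: M,X ⊨ Qx φ (team semantics: ∃F : X → Q with M,X[F/x] ⊨ φ) holds if and only if M,s ⊨ Qx φ (Tarskian: {a : M,s[a/x] ⊨ φ} ∈ Q) for every s ∈ X, provided φ is an L(Q)-formula satisfying the flatness property (M,X' ⊨ φ iff ∀s ∈ X', M,s ⊨ φ). -/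
/-! Flatness reduces team satisfaction of `φ` on `X[F/x]` to the pointwise condition
`F s ⊆ {a : M, s[a/x] ⊨ φ}` for every `s ∈ X`. By monotonicity of `Q`, such an `F` with values
in `Q` exists exactly when these Tarskian witness sets themselves lie in `Q`, and then they are
the canonical choice of `F`. -/

theorem flat_setOf_exists_mem_iff {ι α β : Type*} {P : Set β → Prop}
    (hflat : ∀ Y : Set β, P Y ↔ ∀ t ∈ Y, P {t}) (X : Set ι) (F : ι → Set α) (g : ι → α → β) :
    P {t | ∃ s ∈ X, ∃ a ∈ F s, t = g s a} ↔ ∀ s ∈ X, ∀ a ∈ F s, P {g s a} := by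
  rw [hflat]
  constructor
  · intro h s hs a ha
    exact h _ ⟨s, hs, a, ha, rfl⟩
  · rintro h t ⟨s, hs, a, ha, rfl⟩
    exact h s hs a ha

theorem IsUpperSet.exists_forall_mem_subset_iff {ι α : Type*} {Q : Set (Set α)}
    (hQ : IsUpperSet Q) (X : Set ι) (T : ι → Set α) :
    (∃ F : ι → Set α, (∀ s ∈ X, F s ∈ Q) ∧ ∀ s ∈ X, F s ⊆ T s) ↔ ∀ s ∈ X, T s ∈ Q := by
  constructor
  · rintro ⟨F, hFQ, hFT⟩ s hs
    exact hQ (hFT s hs) (hFQ s hs)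
  · intro hT
    exact ⟨T, hT, fun _ _ => subset_rfl⟩

/-- For a monotone quantifier `Q` of type `⟨1⟩` and a flat team property `P`
(team satisfaction is pointwise Tarskian satisfaction):
`M,X ⊨ Qx φ` in team semantics (i.e. `∃ F : X → Q` with `P(X[F/x])`)
iff for every `s ∈ X` the Tarskian condition `{a : P({s[a/x]})} ∈ Q` holds. -/
theorem team_generalized_quantifier_flat {V M : Type*} [DecidableEq V]
    (Q : Set (Set M)) (hmono : ∀ A B : Set M, A ∈ Q → A ⊆ B → B ∈ Q)
    (x : V) (X : Set (V → M)) (P : Set (V → M) → Prop)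
    (hflat : ∀ X' : Set (V → M), P X' ↔ ∀ s ∈ X', P {s}) :
    (∃ F : (V → M) → Set M, (∀ s ∈ X, F s ∈ Q) ∧
        P {t | ∃ s ∈ X, ∃ a ∈ F s, t = Function.update s x a}) ↔
    (∀ s ∈ X, {a : M | P {Function.update s x a}} ∈ Q) := by
  have hQ : IsUpperSet Q := fun A B hAB hA => hmono A B hA hAB
  simp_rw [flat_setOf_exists_mem_iff hflat]
  exact hQ.exists_forall_mem_subset_iff X _
end

section
/- For a monotone quantifier Q, the non-monotone-style truth condition with the largeness requirement is equivalent to the plain condition: there exists F : X → 𝒫(M) with (1) M,X[F/x] ⊨ φ and (2) for every F' ≥ F with M,X[F'/x] ⊨ φ, F'(s) ∈ Q for all s ∈ X — iff there exists F : X → Q with M,X[F/x] ⊨ φ. -/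
/-- For a monotone quantifier `Q ⊆ 𝒫(M)`, the largeness-augmented truth
condition for `Qx φ` is equivalent to the plain one: there exists
`F : X → 𝒫(M)` with (1) `P(X[F/x])` and (2) for every `F' ≥ F` with
`P(X[F'/x])` one has `F'(s) ∈ Q` for all `s ∈ X` — iff there exists
`F : X → Q` with `P(X[F/x])`. -/
theorem monotone_largeness_iff_plain {V M : Type*} [DecidableEq V]
    (Q : Set (Set M)) (hmono : ∀ A B : Set M, A ∈ Q → A ⊆ B → B ∈ Q)
    (x : V) (X : Set (V → M)) (P : Set (V → M) → Prop) :
    (∃ F : (V → M) → Set M,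
        P {t | ∃ s ∈ X, ∃ a ∈ F s, t = Function.update s x a} ∧
        ∀ F' : (V → M) → Set M, (∀ s ∈ X, F s ⊆ F' s) →
          P {t | ∃ s ∈ X, ∃ a ∈ F' s, t = Function.update s x a} →
          ∀ s ∈ X, F' s ∈ Q) ↔
    (∃ F : (V → M) → Set M, (∀ s ∈ X, F s ∈ Q) ∧
        P {t | ∃ s ∈ X, ∃ a ∈ F s, t = Function.update s x a}) := by
  constructor
  · rintro ⟨F, hP, hlarge⟩
    exact ⟨F, hlarge F (fun _ _ => subset_rfl) hP, hP⟩
  · rintro ⟨F, hQ, hP⟩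
    exact ⟨F, hP, fun F' hle _ s hs => hmono _ _ (hQ s hs) (hle s hs)⟩
end

section
/- Let M = {0,1,2} and R = {(0,0)} ∪ ({0,1}×{1,2}). Then R ∈ Br^S(∃^{=1}, ∃) (witnessed by {0}×{0,1,2} maximal in R), but there is no A ∈ ∃^{=1} and B ≠ ∅ with A×B ⊆ R such that A satisfies the largeness condition (every A' ⊇ A with A'×B ⊆ R has |A'| = 1); i.e., the team-semantic condition for ∃^{=1}x ∃y/x R(x,y) on the singleton team fails while Br^S holds. -/
/-! Every row `a` of `R` lies in `{0, 1}`, and `{0, 1} × {1} ⊆ R`, so no singleton `A` with a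
nonempty section survives the largeness condition. Yet `{0} × M ⊆ R` is maximal, because
`(a, 0) ∉ R` for every `a ≠ 0`. -/

/-- `A × B` is maximal in `R`. -/
def MaximalIn {M : Type*} (A B : Set M) (R : Set (M × M)) : Prop :=
  A ×ˢ B ⊆ R ∧ (∀ A' : Set M, A ⊂ A' → ¬ A' ×ˢ B ⊆ R) ∧
    (∀ B' : Set M, B ⊂ B' → ¬ A ×ˢ B' ⊆ R)

/-- The relation `R = {(0,0)} ∪ ({0,1} × {1,2})` on `M = {0,1,2}`. -/
def R13 : Set (Fin 3 × Fin 3) :=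
  {((0 : Fin 3), (0 : Fin 3))} ∪ ({0, 1} : Set (Fin 3)) ×ˢ ({1, 2} : Set (Fin 3))

open Set

theorem maximalIn_univ {M : Type*} {A : Set M} {R : Set (M × M)} (hA : A ×ˢ univ ⊆ R)
    (hout : ∀ a ∉ A, ∃ b, (a, b) ∉ R) : MaximalIn A univ R := by
  refine ⟨hA, fun A' hAA' hA' => ?_, fun B' hB' _ => hB'.2 (subset_univ B')⟩
  obtain ⟨a, haA', haA⟩ := exists_of_ssubset hAA'
  obtain ⟨b, hb⟩ := hout a haA
  exact hb (hA' ⟨haA', mem_univ b⟩)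

theorem singleton_zero_prod_univ_subset_R13 : ({0} : Set (Fin 3)) ×ˢ univ ⊆ R13 := by
  rintro ⟨x, y⟩ ⟨rfl, -⟩
  fin_cases y <;> simp [R13]

theorem notMem_R13_of_ne_zero {a : Fin 3} (ha : a ≠ 0) : (a, 0) ∉ R13 := by
  simp [R13, ha]

theorem fst_mem_of_mem_R13 {p : Fin 3 × Fin 3} (hp : p ∈ R13) : p.1 ∈ ({0, 1} : Set (Fin 3)) := by
  rcases hp with rfl | ⟨h, -⟩
  · exact mem_insert 0 _
  · exact h

theorem pair_prod_singleton_one_subset_R13 :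
    ({0, 1} : Set (Fin 3)) ×ˢ ({1} : Set (Fin 3)) ⊆ R13 :=
  subset_union_of_subset_right (prod_mono_right (singleton_subset_iff.2 (mem_insert 1 _))) _

/-- `R ∈ Br^S(∃^{=1}, ∃)`, but the team-semantic condition for
`∃^{=1}x ∃y/x R(x,y)` on the singleton team fails: there is no `A` with
`|A| = 1` and some nonempty `B` with `A×B ⊆ R`, such that `A` satisfies the
largeness condition — every `A' ⊇ A` for which some nonempty `B'` has
`A'×B' ⊆ R` still has `|A'| = 1`. -/
theorem sher_branching_counterexample :
    (∃ A : Set (Fin 3), A.encard = 1 ∧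
      ∃ B : Set (Fin 3), B.Nonempty ∧ MaximalIn A B R13) ∧
    ¬ ∃ A : Set (Fin 3), A.encard = 1 ∧
        (∃ B : Set (Fin 3), B.Nonempty ∧ A ×ˢ B ⊆ R13) ∧
        (∀ A' : Set (Fin 3), A ⊆ A' →
          (∃ B' : Set (Fin 3), B'.Nonempty ∧ A' ×ˢ B' ⊆ R13) →
          A'.encard = 1) := by
  constructor
  · exact ⟨{0}, encard_singleton 0, univ, univ_nonempty,
      maximalIn_univ singleton_zero_prod_univ_subset_R13
        fun a ha => ⟨0, notMem_R13_of_ne_zero ha⟩⟩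
  · rintro ⟨A, hA, ⟨B, ⟨b, hb⟩, hAB⟩, hlarge⟩
    obtain ⟨a, rfl⟩ := encard_eq_one.mp hA
    have ha : a ∈ ({0, 1} : Set (Fin 3)) :=
      fst_mem_of_mem_R13 (hAB (mk_mem_prod (mem_singleton a) hb))
    have hpair := hlarge {0, 1} (singleton_subset_iff.2 ha)
      ⟨{1}, singleton_nonempty 1, pair_prod_singleton_one_subset_R13⟩
    rw [encard_pair (by decide)] at hpair
    exact absurd hpair (by decide)
end

section
/- Fagin's theorem on lossless decomposition: X ⊨ x̄ ↠ ȳ if and only if X = (X↾x̄ȳ) ⋈ (X↾x̄z̄), where z̄ = dom(X) ∖ {x̄,ȳ} and ⋈ is natural join. -/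
/-!
Every team lies in the join of its two projections, so only `X↾x̄ȳ ⋈ X↾x̄z̄ ⊆ X` is at stake.
An assignment of the join is glued from a witness `t ∈ X` on `x̄ȳ` and a witness `t' ∈ X` on
`x̄z̄`; these agree on `x̄`, and the dependence `x̄ ↠ ȳ` is exactly the statement that the glued
assignment, equal to `t` on `x̄ȳ` and to `t'` on `z̄`, lies in `X` again.
-/

open Set

namespace Team

variable {V M : Type*}

def SatisfiesMVD (X : Set (V → M)) (xs ys : Set V) : Prop :=
  ∀ s ∈ X, ∀ s' ∈ X, EqOn s s' xs →
    ∃ s₀ ∈ X, EqOn s₀ s (xs ∪ ys) ∧ EqOn s₀ s' (xs ∪ ys)ᶜ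

/-- The natural join `X↾A ⋈ X↾B`, as a team on all of `V`. -/
def projJoin (X : Set (V → M)) (A B : Set V) : Set (V → M) :=
  {s | A.domRestrict s ∈ A.domRestrict '' X ∧ B.domRestrict s ∈ B.domRestrict '' X}

theorem mem_projJoin_iff {X : Set (V → M)} {A B : Set V} {s : V → M} :
    s ∈ projJoin X A B ↔ (∃ t ∈ X, EqOn t s A) ∧ ∃ t ∈ X, EqOn t s B := by
  simp only [projJoin, mem_ofPred_eq, mem_image, domRestrict_eq_domRestrict_iff]

theorem subset_projJoin (X : Set (V → M)) (A B : Set V) : X ⊆ projJoin X A B :=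
  fun s hs => mem_projJoin_iff.2 ⟨⟨s, hs, eqOn_refl s A⟩, ⟨s, hs, eqOn_refl s B⟩⟩

theorem eq_of_eqOn_of_eqOn_compl {f g : V → M} {A : Set V} (h : EqOn f g A)
    (hc : EqOn f g Aᶜ) : f = g := by
  funext v
  by_cases hv : v ∈ A
  exacts [h hv, hc hv]

theorem SatisfiesMVD.projJoin_subset {X : Set (V → M)} {xs ys : Set V}
    (hX : SatisfiesMVD X xs ys) : projJoin X (xs ∪ ys) (xs ∪ (xs ∪ ys)ᶜ) ⊆ X := by
  intro s hs
  obtain ⟨⟨t, ht, hts⟩, ⟨t', ht', hts'⟩⟩ := mem_projJoin_iff.1 hs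
  have hxs : EqOn t t' xs := fun v hv => (hts (Or.inl hv)).trans (hts' (Or.inl hv)).symm
  obtain ⟨s₀, hs₀, h₀t, h₀t'⟩ := hX t ht t' ht' hxs
  have : s₀ = s := eq_of_eqOn_of_eqOn_compl (h₀t.trans hts)
    (h₀t'.trans (hts'.mono subset_union_right))
  exact this ▸ hs₀

theorem satisfiesMVD_of_projJoin_subset {X : Set (V → M)} {xs ys : Set V}
    (hX : projJoin X (xs ∪ ys) (xs ∪ (xs ∪ ys)ᶜ) ⊆ X) : SatisfiesMVD X xs ys := by
  classical
  intro s hs s' hs' hxs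
  set s₀ := (xs ∪ ys).piecewise s s'
  have h₀s : EqOn s₀ s (xs ∪ ys) := (xs ∪ ys).piecewise_eqOn s s'
  have h₀s' : EqOn s₀ s' (xs ∪ ys)ᶜ := (xs ∪ ys).piecewise_eqOn_compl s s'
  refine ⟨s₀, hX (mem_projJoin_iff.2 ⟨⟨s, hs, h₀s.symm⟩, ⟨s', hs', ?_⟩⟩), h₀s, h₀s'⟩
  exact eqOn_union.2 ⟨hxs.symm.trans (h₀s.mono subset_union_left).symm, h₀s'.symm⟩

theorem satisfiesMVD_iff_eq_projJoin {X : Set (V → M)} {xs ys : Set V} :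
    SatisfiesMVD X xs ys ↔ X = projJoin X (xs ∪ ys) (xs ∪ (xs ∪ ys)ᶜ) :=
  ⟨fun hX => (hX.projJoin_subset).antisymm (subset_projJoin _ _ _) |>.symm,
    fun hX => satisfiesMVD_of_projJoin_subset hX.symm.subset⟩

end Team

theorem fagin_lossless_decomposition_general {V M : Type*} (X : Set (V → M))
    (xs ys : Set V) :
    (∀ s ∈ X, ∀ s' ∈ X, Set.EqOn s s' xs →
      ∃ s₀ ∈ X, Set.EqOn s₀ s (xs ∪ ys) ∧ Set.EqOn s₀ s' (xs ∪ ys)ᶜ) ↔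
    X = {s : V → M |
      (xs ∪ ys).restrict s ∈ (xs ∪ ys).restrict '' X ∧
      (xs ∪ (xs ∪ ys)ᶜ).restrict s ∈ (xs ∪ (xs ∪ ys)ᶜ).restrict '' X} :=
  Team.satisfiesMVD_iff_eq_projJoin

/-- Fagin's theorem on lossless decomposition: a team `X` satisfies the
multivalued dependence `x̄ ↠ ȳ` iff `X = (X↾x̄ȳ) ⋈ (X↾x̄z̄)`, where
`z̄ = dom(X) ∖ (x̄ ∪ ȳ)` and the natural join consists of all assignments
whose restrictions to `x̄ȳ` and `x̄z̄` come from `X`. -/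
theorem fagin_lossless_decomposition {V M : Type*} (X : Set (V → M))
    (xs ys : Set V) (hdisj : Disjoint xs ys) :
    (∀ s ∈ X, ∀ s' ∈ X, Set.EqOn s s' xs →
      ∃ s₀ ∈ X, Set.EqOn s₀ s (xs ∪ ys) ∧ Set.EqOn s₀ s' (xs ∪ ys)ᶜ) ↔
    X = {s : V → M |
      (xs ∪ ys).restrict s ∈ (xs ∪ ys).restrict '' X ∧
      (xs ∪ (xs ∪ ys)ᶜ).restrict s ∈ (xs ∪ (xs ∪ ys)ᶜ).restrict '' X} :=
  fagin_lossless_decomposition_general X xs ys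
end
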